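/- Let P be the transition matrix of the simple random walk on a finite connected graph G with spectral gap γ(P). Let α ∈ (0,1) and let (p_v)_{v∈V} ∈ [0,α)^V be a lazy vector. Let Q be the transition matrix of the walk that, when at v, stays put with probability p_v and otherwise takes a step according to P. Then γ(Q) ≥ (1−α)γ(P). -/

import Mathlib

open scoped Classical

noncomputable section

namespace Paper

variable {V : Type} [Fintype V]

/-- The degree of a vertex `v` in a simple graph `G`. -/
def deg (G : SimpleGraph V) (v : V) : ℕ := Nat.card {u | G.Adj v u}

/-- The transition matrix of the simple random walk on `G`. -/
def transMat (G : SimpleGraph V) : Matrix V V ℝ :=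
  fun v u => if G.Adj v u then (deg G v : ℝ)⁻¹ else 0

/-- Rayleigh quotients of `P` over unit functions orthogonal to constants in `L²(m)`;
its supremum is the second largest eigenvalue `λ₂`. -/
def rayleigh (P : Matrix V V ℝ) (m : V → ℝ) : Set ℝ :=
  {r | ∃ f : V → ℝ, (∑ v, m v * f v) = 0 ∧ (∑ v, m v * f v ^ 2) = 1 ∧
       r = ∑ v, m v * f v * (∑ u, P v u * f u)}

/-- The spectral gap `1 - λ₂` of `P` (reversible with respect to the weights `m`). -/
def matGap (P : Matrix V V ℝ) (m : V → ℝ) : ℝ := 1 - sSup (rayleigh P m)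

/-- The lazified transition matrix: at `v`, stay put with probability `p v` and
otherwise move according to `P`. -/
def lazyVecMat (P : Matrix V V ℝ) (p : V → ℝ) : Matrix V V ℝ :=
  fun v u => if u = v then p v + (1 - p v) * P v v else (1 - p v) * P v u

/-! Lazifying at `v` multiplies the stationary weight by `(1 - p v)⁻¹` but leaves the
Dirichlet form `𝓔(f) = ⟨f, (I - P) f⟩_π` unchanged, so a `π_Q`-mean-zero unit vector `f` has
`⟨f, Q f⟩ = 1 - 𝓔(f)`. Recentring `f` to `π_P`-mean zero does not change `𝓔` and does not
decrease its `π_Q`-variance, and `π_P ≥ (1 - α) π_Q` pointwise, so the recentred `g` has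
`π_P`-variance at least `1 - α`. The variational bound `γ(P) Var_{π_P} g ≤ 𝓔(g)` then gives
`𝓔(f) ≥ (1 - α) γ(P)`. -/

open Matrix

def dirichletForm (P : Matrix V V ℝ) (m f : V → ℝ) : ℝ :=
  ∑ v, m v * f v ^ 2 - ∑ v, m v * f v * ∑ u, P v u * f u

lemma rayleigh_eq_empty [Subsingleton V] (P : Matrix V V ℝ) (m : V → ℝ) :
    rayleigh P m = ∅ := by
  refine Set.eq_empty_of_forall_notMem ?_
  rintro r ⟨f, hmean, hnorm, -⟩
  rcases isEmpty_or_nonempty V with hV | ⟨⟨v⟩⟩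
  · simp at hnorm
  · rw [Fintype.sum_subsingleton _ v] at hmean hnorm
    have : m v * f v ^ 2 = m v * f v * f v := by ring
    rw [this, hmean, zero_mul] at hnorm
    exact zero_ne_one hnorm

lemma matGap_of_subsingleton [Subsingleton V] (P : Matrix V V ℝ) (m : V → ℝ) :
    matGap P m = 1 := by
  rw [matGap, rayleigh_eq_empty, Real.sSup_empty, sub_zero]

section Rayleigh

variable {P : Matrix V V ℝ} {m : V → ℝ}

lemma div_mem_rayleigh {g : V → ℝ} (hg : ∑ v, m v * g v = 0)
    (hS : 0 < ∑ v, m v * g v ^ 2) :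
    (∑ v, m v * g v * ∑ u, P v u * g u) / ∑ v, m v * g v ^ 2 ∈ rayleigh P m := by
  set S := ∑ v, m v * g v ^ 2
  have hs : 0 < √S := Real.sqrt_pos.mpr hS
  refine ⟨fun v => g v / √S, ?_, ?_, ?_⟩
  · simp_rw [mul_div_assoc', ← Finset.sum_div, hg, zero_div]
  · simp_rw [div_pow, Real.sq_sqrt hS.le, mul_div_assoc', ← Finset.sum_div]
    exact div_self hS.ne'
  · rw [Finset.sum_div]
    refine Finset.sum_congr rfl fun v _ => ?_
    simp_rw [mul_div_assoc', ← Finset.sum_div]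
    field_simp
    rw [Real.sq_sqrt hS.le]

lemma rayleigh_nonempty [Nontrivial V] (hm : ∀ v, 0 < m v) : (rayleigh P m).Nonempty := by
  obtain ⟨a, b, hab⟩ := exists_pair_ne V
  let g : V → ℝ := Pi.single a (m b) - Pi.single b (m a)
  have hg : ∑ v, m v * g v = 0 := by
    simp [g, mul_sub, Finset.sum_sub_distrib, Pi.single_apply, mul_comm]
  have hS : 0 < ∑ v, m v * g v ^ 2 := by
    refine Finset.sum_pos' (fun v _ => mul_nonneg (hm v).le (sq_nonneg _))
      ⟨a, Finset.mem_univ a, ?_⟩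
    simp only [g, Pi.sub_apply, Pi.single_eq_same, Pi.single_eq_of_ne hab, sub_zero]
    exact mul_pos (hm a) (pow_pos (hm b) 2)
  exact ⟨_, div_mem_rayleigh hg hS⟩

lemma matGap_mul_le_dirichletForm (hE : ∀ f, 0 ≤ dirichletForm P m f) {g : V → ℝ}
    (hg : ∑ v, m v * g v = 0) (hS : 0 < ∑ v, m v * g v ^ 2) :
    matGap P m * ∑ v, m v * g v ^ 2 ≤ dirichletForm P m g := by
  have hbdd : BddAbove (rayleigh P m) := by
    refine ⟨1, ?_⟩
    rintro r ⟨f, -, hf, rfl⟩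
    have := hE f
    rw [dirichletForm, hf] at this
    linarith
  have hle := le_csSup hbdd (div_mem_rayleigh (P := P) hg hS)
  have hq : (∑ v, m v * g v * ∑ u, P v u * g u) / ∑ v, m v * g v ^ 2
      = 1 - dirichletForm P m g / ∑ v, m v * g v ^ 2 := by
    rw [dirichletForm, sub_div, div_self hS.ne', sub_sub_cancel]
  rw [matGap, ← le_div_iff₀ hS]
  linarith

end Rayleigh

section Reversible

variable {P : Matrix V V ℝ} {m : V → ℝ}

lemma dirichletForm_eq_half_sum_sq (hP : P ∈ rowStochastic ℝ V)
    (hrev : ∀ v u, m v * P v u = m u * P u v) (f : V → ℝ) :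
    dirichletForm P m f = (∑ v, ∑ u, m v * P v u * (f v - f u) ^ 2) / 2 := by
  have hleft : ∑ v, ∑ u, m v * P v u * f v ^ 2 = ∑ v, m v * f v ^ 2 := by
    refine Finset.sum_congr rfl fun v _ => ?_
    rw [← Finset.sum_mul, ← Finset.mul_sum, sum_row_of_mem_rowStochastic hP, mul_one]
  have hright : ∑ v, ∑ u, m v * P v u * f u ^ 2 = ∑ v, m v * f v ^ 2 := by
    rw [Finset.sum_comm]
    simp_rw [hrev]
    exact hleft
  have hcross : ∑ v, ∑ u, m v * P v u * (f v * f u) = ∑ v, m v * f v * ∑ u, P v u * f u := by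
    refine Finset.sum_congr rfl fun v _ => ?_
    rw [Finset.mul_sum]
    exact Finset.sum_congr rfl fun u _ => by ring
  have hexpand : ∀ v u, m v * P v u * (f v - f u) ^ 2 =
      m v * P v u * f v ^ 2 - 2 * (m v * P v u * (f v * f u)) + m v * P v u * f u ^ 2 :=
    fun v u => by ring
  simp_rw [hexpand, Finset.sum_add_distrib, Finset.sum_sub_distrib, ← Finset.mul_sum, hleft,
    hright, hcross, dirichletForm]
  ring

lemma dirichletForm_nonneg (hP : P ∈ rowStochastic ℝ V)
    (hrev : ∀ v u, m v * P v u = m u * P u v) (hm : ∀ v, 0 ≤ m v) (f : V → ℝ) :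
    0 ≤ dirichletForm P m f := by
  rw [dirichletForm_eq_half_sum_sq hP hrev]
  refine div_nonneg (Finset.sum_nonneg fun v _ => Finset.sum_nonneg fun u _ => ?_) zero_le_two
  exact mul_nonneg (mul_nonneg (hm v) (nonneg_of_mem_rowStochastic hP)) (sq_nonneg _)

lemma dirichletForm_sub_const (hP : P ∈ rowStochastic ℝ V)
    (hrev : ∀ v u, m v * P v u = m u * P u v) (f : V → ℝ) (c : ℝ) :
    dirichletForm P m (fun v => f v - c) = dirichletForm P m f := by
  simp_rw [dirichletForm_eq_half_sum_sq hP hrev, sub_sub_sub_cancel_right]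

end Reversible

lemma sum_mul_sub_weightedMean {m : V → ℝ} (hm : ∑ v, m v ≠ 0) (f : V → ℝ) :
    ∑ v, m v * (f v - (∑ u, m u * f u) / ∑ u, m u) = 0 := by
  simp_rw [mul_sub, Finset.sum_sub_distrib, ← Finset.sum_mul]
  field_simp
  ring

lemma sum_mul_sq_le_sum_mul_sub_sq {m f : V → ℝ} (hm : ∀ v, 0 ≤ m v)
    (hf : ∑ v, m v * f v = 0) (c : ℝ) :
    ∑ v, m v * f v ^ 2 ≤ ∑ v, m v * (f v - c) ^ 2 := by
  have hexpand : ∀ v, m v * (f v - c) ^ 2 = m v * f v ^ 2 - 2 * c * (m v * f v) + c ^ 2 * m v :=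
    fun v => by ring
  simp_rw [hexpand, Finset.sum_add_distrib, Finset.sum_sub_distrib, ← Finset.mul_sum, hf]
  have : 0 ≤ c ^ 2 * ∑ v, m v := by
    have := Finset.sum_nonneg fun v (_ : v ∈ Finset.univ) => hm v
    positivity
  linarith

lemma sum_lazyVecMat_mul (P : Matrix V V ℝ) (p f : V → ℝ) (v : V) :
    ∑ u, lazyVecMat P p v u * f u = p v * f v + (1 - p v) * ∑ u, P v u * f u := by
  have hsplit : ∀ u, lazyVecMat P p v u * f u =
      (if u = v then p v * f v else 0) + (1 - p v) * (P v u * f u) := by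
    intro u
    unfold lazyVecMat
    split_ifs with h
    · subst h; ring
    · ring
  simp_rw [hsplit, Finset.sum_add_distrib, Finset.sum_ite_eq', Finset.mem_univ, if_true,
    Finset.mul_sum]

lemma dirichletForm_lazyVecMat {P : Matrix V V ℝ} {m p : V → ℝ} (hp : ∀ v, 1 - p v ≠ 0)
    (f : V → ℝ) :
    dirichletForm (lazyVecMat P p) (fun v => m v / (1 - p v)) f = dirichletForm P m f := by
  simp_rw [dirichletForm, sum_lazyVecMat_mul, ← Finset.sum_sub_distrib]
  refine Finset.sum_congr rfl fun v _ => ?_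
  have := hp v
  field_simp
  ring

section Comparison

variable {P Q : Matrix V V ℝ} {m m' : V → ℝ} {β : ℝ}

lemma mul_matGap_le_dirichletForm [Nonempty V] (hP : P ∈ rowStochastic ℝ V)
    (hrev : ∀ v u, m v * P v u = m u * P u v) (hβ : 0 < β) (hm' : ∀ v, 0 < m' v)
    (hmm' : ∀ v, β * m' v ≤ m v) {f : V → ℝ} (hf₀ : ∑ v, m' v * f v = 0)
    (hf₁ : ∑ v, m' v * f v ^ 2 = 1) :
    β * matGap P m ≤ dirichletForm P m f := by
  have hm : ∀ v, 0 < m v := fun v => (mul_pos hβ (hm' v)).trans_le (hmm' v)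
  have hE := dirichletForm_nonneg hP hrev fun v => (hm v).le
  set g : V → ℝ := fun v => f v - (∑ u, m u * f u) / ∑ u, m u
  have hg : ∑ v, m v * g v = 0 :=
    sum_mul_sub_weightedMean (Finset.sum_pos (fun v _ => hm v) Finset.univ_nonempty).ne' f
  have hvar : β ≤ ∑ v, m v * g v ^ 2 := calc
    β = β * ∑ v, m' v * f v ^ 2 := by rw [hf₁, mul_one]
    _ ≤ β * ∑ v, m' v * g v ^ 2 :=
      mul_le_mul_of_nonneg_left (sum_mul_sq_le_sum_mul_sub_sq (fun v => (hm' v).le) hf₀ _) hβ.le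
    _ = ∑ v, β * m' v * g v ^ 2 := by simp_rw [Finset.mul_sum, mul_assoc]
    _ ≤ ∑ v, m v * g v ^ 2 := Finset.sum_le_sum fun v _ => by gcongr; exact hmm' v
  have hgap := matGap_mul_le_dirichletForm hE hg (hβ.trans_le hvar)
  rw [dirichletForm_sub_const hP hrev] at hgap
  rcases le_or_gt 0 (matGap P m) with h | h
  · nlinarith
  · nlinarith [hE f]

theorem mul_matGap_le_matGap_of_dirichletForm_eq [Nontrivial V] (hP : P ∈ rowStochastic ℝ V)
    (hrev : ∀ v u, m v * P v u = m u * P u v) (hβ : 0 < β) (hm' : ∀ v, 0 < m' v)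
    (hmm' : ∀ v, β * m' v ≤ m v) (hE : ∀ f, dirichletForm Q m' f = dirichletForm P m f) :
    β * matGap P m ≤ matGap Q m' := by
  have hsup : sSup (rayleigh Q m') ≤ 1 - β * matGap P m := by
    refine csSup_le (rayleigh_nonempty hm') ?_
    rintro r ⟨f, hf₀, hf₁, rfl⟩
    have := mul_matGap_le_dirichletForm hP hrev hβ hm' hmm' hf₀ hf₁
    rw [← hE, dirichletForm, hf₁] at this
    linarith
  rw [show matGap Q m' = 1 - sSup (rayleigh Q m') from rfl]
  linarith

end Comparison

section Graph

variable (G : SimpleGraph V)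

lemma deg_pos_of_adj {v u : V} (h : G.Adj v u) : 0 < deg G v :=
  have : Nonempty {u | G.Adj v u} := ⟨⟨u, h⟩⟩
  Nat.card_pos

lemma deg_pos [Nontrivial V] (hconn : G.Connected) (v : V) : 0 < deg G v := by
  obtain ⟨u, hu⟩ := exists_ne v
  obtain ⟨w⟩ := hconn.preconnected v u
  cases w with
  | nil => exact absurd rfl hu
  | cons h _ => exact deg_pos_of_adj G h

lemma deg_mul_transMat (v u : V) :
    (deg G v : ℝ) * transMat G v u = if G.Adj v u then 1 else 0 := by
  unfold transMat
  split_ifs with h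
  · exact mul_inv_cancel₀ (Nat.cast_ne_zero.2 (deg_pos_of_adj G h).ne')
  · exact mul_zero _

lemma transMat_detailedBalance (v u : V) :
    (deg G v : ℝ) * transMat G v u = deg G u * transMat G u v := by
  rw [deg_mul_transMat, deg_mul_transMat, G.adj_comm]

lemma transMat_mem_rowStochastic (hdeg : ∀ v, 0 < deg G v) :
    transMat G ∈ rowStochastic ℝ V := by
  refine mem_rowStochastic_iff_sum.2 ⟨fun v u => ?_, fun v => ?_⟩
  · unfold transMat
    split_ifs <;> positivity
  · have hv : (deg G v : ℝ) ≠ 0 := Nat.cast_ne_zero.2 (hdeg v).ne'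
    rw [← mul_right_inj' hv, Finset.mul_sum]
    simp_rw [deg_mul_transMat, Finset.sum_boole, mul_one, deg, Nat.card_eq_fintype_card,
      Fintype.card_subtype]
    rfl

end Graph

/-- **Claim 2.8.**  Let `P` be the transition matrix of the simple random walk on a
finite connected graph `G`, let `α ∈ (0,1)` and let `(p_v)_{v∈V} ∈ [0,α)^V` be a lazy
vector.  If `Q` is the transition matrix of the walk which at `v` stays put with
probability `p v` and otherwise moves according to `P` (a walk reversible with respect
to `π_Q(v) ∝ deg(v)/(1 - p v)`), then `γ(Q) ≥ (1-α) γ(P)`. -/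
theorem lazyVec_gap (G : SimpleGraph V) (hconn : G.Connected)
    (α : ℝ) (hα : α ∈ Set.Ioo (0 : ℝ) 1)
    (p : V → ℝ) (hp : ∀ v, p v ∈ Set.Ico (0 : ℝ) α) :
    (1 - α) * matGap (transMat G) (fun v => (deg G v : ℝ)) ≤
      matGap (lazyVecMat (transMat G) p) (fun v => (deg G v : ℝ) / (1 - p v)) := by
  rcases subsingleton_or_nontrivial V with hV | hV
  · -- no mean-zero unit vectors exist, so both gaps are `1 - sSup ∅ = 1`
    rw [matGap_of_subsingleton, matGap_of_subsingleton]
    linarith [hα.1]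
  have hdeg : ∀ v, (0 : ℝ) < deg G v := fun v => Nat.cast_pos.2 (deg_pos G hconn v)
  have hp₁ : ∀ v, 0 < 1 - p v := fun v => by linarith [(hp v).2, hα.2]
  refine mul_matGap_le_matGap_of_dirichletForm_eq
    (transMat_mem_rowStochastic G fun v => deg_pos G hconn v) (transMat_detailedBalance G)
    (sub_pos.2 hα.2) (fun v => div_pos (hdeg v) (hp₁ v)) (fun v => ?_)
    (dirichletForm_lazyVecMat fun v => (hp₁ v).ne')
  rw [mul_div_assoc', div_le_iff₀ (hp₁ v)]
  nlinarith [(hp v).2, hdeg v]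

end Paper
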